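/- arXiv:2109.14629 — 3 statements merged into one kernel-verified Lean document; each statement's English description precedes it below -/
import Mathlib

section
/- Let H(k) be a continuous family of invertible Hermitian matrices on a parameter space, S an invertible matrix with S² = 1 anticommuting with H(k) (chiral symmetry), and suppose a unitary U and a sign χ ∈ {±1} satisfy U S U† = χ S and U H(k) U† = H(R k) for an orthogonal transformation R of the 3-dimensional parameter space. Then the 3D winding number z_w of H satisfies z_w = χ · det(R) · z_w; in particular if χ · det(R) = −1 then z_w = 0. -/
open MeasureTheory

attribute [local instance] Matrix.normedAddCommGroup Matrix.normedSpace

/-- One factor `S H(k)⁻¹ ∂_α H(k)` of the integrand of the 3D winding number. -/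
noncomputable def windingFactor {n : Type*} [Fintype n] [DecidableEq n]
    (H : (Fin 3 → ℝ) → Matrix n n ℂ) (S : Matrix n n ℂ)
    (k : Fin 3 → ℝ) (α : Fin 3) : Matrix n n ℂ :=
  S * (H k)⁻¹ * fderiv ℝ H k (Pi.single α 1)

/-- The 3D winding number
`z_w = ∫ d³k/(48π²) ε^{αβγ} Tr[S H⁻¹ ∂_α H · S H⁻¹ ∂_β H · S H⁻¹ ∂_γ H]`
of a chiral-symmetric Hamiltonian family. -/
noncomputable def windingNumber {n : Type*} [Fintype n] [DecidableEq n]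
    (H : (Fin 3 → ℝ) → Matrix n n ℂ) (S : Matrix n n ℂ) : ℝ :=
  (1 / (48 * Real.pi ^ 2)) *
    ∫ k : Fin 3 → ℝ,
      ∑ σ : Equiv.Perm (Fin 3),
        ((Equiv.Perm.sign σ : ℤ) : ℝ) *
          (Matrix.trace
            (windingFactor H S k (σ 0) * windingFactor H S k (σ 1) *
              windingFactor H S k (σ 2))).re

section aux

variable {n : Type*} [Fintype n] [DecidableEq n]

/-- The integrand of the winding number. -/
noncomputable def wIntegrand (H : (Fin 3 → ℝ) → Matrix n n ℂ) (S : Matrix n n ℂ)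
    (k : Fin 3 → ℝ) : ℝ :=
  ∑ σ : Equiv.Perm (Fin 3),
    ((Equiv.Perm.sign σ : ℤ) : ℝ) *
      (Matrix.trace
        (windingFactor H S k (σ 0) * windingFactor H S k (σ 1) *
          windingFactor H S k (σ 2))).re

/-- The linear map `v ↦ S (H k)⁻¹ ∂_v H`. -/
noncomputable def wPhi (H : (Fin 3 → ℝ) → Matrix n n ℂ) (S : Matrix n n ℂ)
    (k : Fin 3 → ℝ) : (Fin 3 → ℝ) →ₗ[ℝ] Matrix n n ℂ :=
  (LinearMap.mulLeft ℝ (S * (H k)⁻¹)) ∘ₗ (fderiv ℝ H k).toLinearMap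

/-- The trilinear map `(v₀,v₁,v₂) ↦ Re tr (Φ v₀ Φ v₁ Φ v₂)`. -/
noncomputable def wMulti (H : (Fin 3 → ℝ) → Matrix n n ℂ) (S : Matrix n n ℂ)
    (k : Fin 3 → ℝ) : MultilinearMap ℝ (fun _ : Fin 3 => (Fin 3 → ℝ)) ℝ :=
  (Complex.reLm ∘ₗ Matrix.traceLinearMap n ℝ ℂ).compMultilinearMap
    ((MultilinearMap.mkPiAlgebraFin ℝ 3 (Matrix n n ℂ)).compLinearMap (fun _ => wPhi H S k))

lemma wPhi_single (H : (Fin 3 → ℝ) → Matrix n n ℂ) (S : Matrix n n ℂ) (k : Fin 3 → ℝ)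
    (α : Fin 3) : wPhi H S k (Pi.single α 1) = windingFactor H S k α := by
  simp [wPhi, windingFactor, LinearMap.mulLeft_apply, Matrix.mul_assoc]

lemma wAlt_apply (H : (Fin 3 → ℝ) → Matrix n n ℂ) (S : Matrix n n ℂ) (k : Fin 3 → ℝ)
    (v : Fin 3 → (Fin 3 → ℝ)) :
    MultilinearMap.alternatization (wMulti H S k) v =
      ∑ σ : Equiv.Perm (Fin 3),
        ((Equiv.Perm.sign σ : ℤ) : ℝ) *
          (Matrix.trace (wPhi H S k (v (σ 0)) * wPhi H S k (v (σ 1)) *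
            wPhi H S k (v (σ 2)))).re := by
  rw [MultilinearMap.alternatization_apply]
  refine Finset.sum_congr rfl fun σ _ => ?_
  have : (wMulti H S k).domDomCongr σ v =
      (Matrix.trace (wPhi H S k (v (σ 0)) * wPhi H S k (v (σ 1)) *
            wPhi H S k (v (σ 2)))).re := by
    simp [wMulti, MultilinearMap.domDomCongr_apply, MultilinearMap.mkPiAlgebraFin_apply,
      List.ofFn_succ, Matrix.mul_assoc]
  rw [this, Units.smul_def, zsmul_eq_mul]

lemma trace_conj_re (U X Y Z : Matrix n n ℂ) (χ : ℝ) (hχ2 : χ * χ = 1)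
    (hU1 : star U * U = 1) :
    ((Matrix.trace (((χ:ℂ) • (U * X * star U)) * ((χ:ℂ) • (U * Y * star U)) *
      ((χ:ℂ) • (U * Z * star U))))).re = χ * (Matrix.trace (X * Y * Z)).re := by
  have hU1' : ∀ W : Matrix n n ℂ, star U * (U * W) = W := fun W => by
    rw [← Matrix.mul_assoc, hU1, Matrix.one_mul]
  have hc : ((χ : ℂ)) * ((χ : ℂ)) = 1 := by
    rw [← Complex.ofReal_mul, hχ2, Complex.ofReal_one]
  simp only [Matrix.smul_mul, Matrix.mul_smul, smul_smul]
  simp only [Matrix.mul_assoc, hU1']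
  rw [Matrix.trace_smul, Matrix.trace_mul_comm]
  simp only [Matrix.mul_assoc, hU1, Matrix.mul_one]
  rw [show (Matrix.trace (X * (Y * Z))) = Matrix.trace (X * Y * Z) by rw [Matrix.mul_assoc]]
  rw [smul_eq_mul, mul_assoc, hc, one_mul, Complex.re_ofReal_mul]

lemma windingFactor_mulVec
    (H : (Fin 3 → ℝ) → Matrix n n ℂ) (S U : Matrix n n ℂ) (χ : ℝ)
    (R : Matrix (Fin 3) (Fin 3) ℝ)
    (hHdiff : Differentiable ℝ H)
    (hHinv : ∀ k, IsUnit (H k))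
    (hχ2 : χ * χ = 1)
    (hU1 : star U * U = 1) (hU2 : U * star U = 1)
    (hdetu : IsUnit R.det)
    (hUS : U * S * star U = (χ : ℂ) • S)
    (hUH : ∀ k, U * H k * star U = H (R.mulVec k)) (k : Fin 3 → ℝ) (α : Fin 3) :
    windingFactor H S (R.mulVec k) α =
      (χ : ℂ) • (U * wPhi H S k (R⁻¹.mulVec (Pi.single α 1)) * star U) := by
  classical
  have hHdet : ∀ k, IsUnit (H k).det := fun k => (Matrix.isUnit_iff_isUnit_det _).mp (hHinv k)
  have hU1' : ∀ X : Matrix n n ℂ, star U * (U * X) = X := fun X => by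
    rw [← Matrix.mul_assoc, hU1, Matrix.one_mul]
  have hSU : S * U = (χ : ℂ) • (U * S) := by
    have h1 : U * S = (χ : ℂ) • (S * U) := by
      have h := congrArg (· * U) hUS
      simpa [Matrix.mul_assoc, hU1, Matrix.smul_mul] using h
    have hc : ((χ : ℂ)) * ((χ : ℂ)) = 1 := by
      rw [← Complex.ofReal_mul, hχ2, Complex.ofReal_one]
    rw [h1, smul_smul, hc, one_smul]
  have hinv : (H (R.mulVec k))⁻¹ = U * (H k)⁻¹ * star U := by
    rw [← hUH k]
    apply Matrix.inv_eq_left_inv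
    calc (U * (H k)⁻¹ * star U) * (U * H k * star U)
        = U * ((H k)⁻¹ * (star U * (U * (H k * star U)))) := by
          simp only [Matrix.mul_assoc]
      _ = 1 := by
          rw [hU1', ← Matrix.mul_assoc ((H k)⁻¹), Matrix.nonsing_inv_mul _ (hHdet k),
            Matrix.one_mul, hU2]
  have hD : ∀ v, fderiv ℝ H (R.mulVec k) (R.mulVec v) = U * fderiv ℝ H k v * star U := by
    intro v
    let conjL : Matrix n n ℂ →ₗ[ℝ] Matrix n n ℂ :=
      { toFun := fun A => U * A * star U
        map_add' := fun A B => by simp [Matrix.mul_add, Matrix.add_mul]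
        map_smul' := fun r A => by simp [Matrix.mul_smul, Matrix.smul_mul] }
    let conjC := conjL.toContinuousLinearMap
    have h1 : HasFDerivAt (fun x => U * H x * star U) (conjC.comp (fderiv ℝ H k)) k :=
      conjC.hasFDerivAt.comp k (hHdiff k).hasFDerivAt
    let Rc := (Matrix.toLin' R).toContinuousLinearMap
    have hRc : ∀ x, Rc x = R.mulVec x := fun x => by simp [Rc, Matrix.toLin'_apply]
    have h2 : HasFDerivAt (fun x => H (R.mulVec x))
        ((fderiv ℝ H (R.mulVec k)).comp Rc) k :=
      (hHdiff (R.mulVec k)).hasFDerivAt.comp k Rc.hasFDerivAt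
    have h2' : HasFDerivAt (fun x => U * H x * star U)
        ((fderiv ℝ H (R.mulVec k)).comp Rc) k := by
      have : (fun x => H (R.mulVec x)) = fun x => U * H x * star U :=
        funext fun x => (hUH x).symm
      rwa [this] at h2
    have heq := h2'.unique h1
    have := ContinuousLinearMap.ext_iff.mp heq v
    simpa [hRc, conjC, conjL] using this
  have hRR : R.mulVec (R⁻¹.mulVec (Pi.single α 1)) = Pi.single α 1 := by
    rw [Matrix.mulVec_mulVec, Matrix.mul_nonsing_inv _ hdetu, Matrix.one_mulVec]
  have h1 : fderiv ℝ H (R.mulVec k) (Pi.single α 1)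
      = U * fderiv ℝ H k (R⁻¹.mulVec (Pi.single α 1)) * star U := by
    conv_lhs => rw [← hRR]
    exact hD _
  rw [windingFactor, hinv, h1]
  simp only [wPhi, LinearMap.coe_comp, Function.comp_apply, ContinuousLinearMap.coe_coe,
    LinearMap.mulLeft_apply]
  simp only [Matrix.mul_assoc]
  rw [hU1', ← Matrix.mul_assoc S U, hSU]
  simp [Matrix.smul_mul, Matrix.mul_smul, Matrix.mul_assoc]

/-- The key pointwise identity for the integrand. -/
lemma wIntegrand_mulVec
    (H : (Fin 3 → ℝ) → Matrix n n ℂ) (S U : Matrix n n ℂ) (χ : ℝ)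
    (R : Matrix (Fin 3) (Fin 3) ℝ)
    (hHdiff : Differentiable ℝ H)
    (hHinv : ∀ k, IsUnit (H k))
    (hχ2 : χ * χ = 1)
    (hU1 : star U * U = 1) (hU2 : U * star U = 1)
    (hdet2 : R.det * R.det = 1)
    (hUS : U * S * star U = (χ : ℂ) • S)
    (hUH : ∀ k, U * H k * star U = H (R.mulVec k)) (k : Fin 3 → ℝ) :
    wIntegrand H S (R.mulVec k) = (χ * R.det) * wIntegrand H S k := by
  classical
  have hdetu : IsUnit R.det := IsUnit.of_mul_eq_one _ hdet2
  have hdet1 : R.det = 1 ∨ R.det = -1 := mul_self_eq_one_iff.mp hdet2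
  set A := MultilinearMap.alternatization (wMulti H S k) with hAdef
  set w : Fin 3 → (Fin 3 → ℝ) := fun i => R⁻¹.mulVec (Pi.single i 1) with hwdef
  have hterm : ∀ a b c : Fin 3,
      (Matrix.trace (windingFactor H S (R.mulVec k) a * windingFactor H S (R.mulVec k) b *
        windingFactor H S (R.mulVec k) c)).re
      = χ * (Matrix.trace (wPhi H S k (w a) * wPhi H S k (w b) * wPhi H S k (w c))).re := by
    intro a b c
    rw [windingFactor_mulVec H S U χ R hHdiff hHinv hχ2 hU1 hU2 hdetu hUS hUH k a,
      windingFactor_mulVec H S U χ R hHdiff hHinv hχ2 hU1 hU2 hdetu hUS hUH k b,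
      windingFactor_mulVec H S U χ R hHdiff hHinv hχ2 hU1 hU2 hdetu hUS hUH k c]
    exact trace_conj_re U _ _ _ χ hχ2 hU1
  have h1 : wIntegrand H S (R.mulVec k) = χ * A w := by
    rw [hAdef, wAlt_apply, wIntegrand, Finset.mul_sum]
    refine Finset.sum_congr rfl fun σ _ => ?_
    rw [hterm]
    ring
  have h2 : wIntegrand H S k = A (fun i => Pi.single i 1) := by
    rw [hAdef, wAlt_apply, wIntegrand]
    refine Finset.sum_congr rfl fun σ _ => ?_
    rw [wPhi_single, wPhi_single, wPhi_single]
  have hdetinv : R⁻¹.det = R.det := by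
    rw [Matrix.det_nonsing_inv, Ring.inverse_eq_inv']
    rcases hdet1 with h | h <;> rw [h] <;> norm_num
  have h3 : A w = R.det * A (fun i => Pi.single i 1) := by
    have hb := A.eq_smul_basis_det (Pi.basisFun ℝ (Fin 3))
    have hcoe : ⇑(Pi.basisFun ℝ (Fin 3)) = fun i : Fin 3 => Pi.single i 1 := by
      funext i; simp
    have hdw : (Pi.basisFun ℝ (Fin 3)).det w = R⁻¹.det := by
      rw [Module.Basis.det_apply]
      congr 1
      ext i j
      rw [Module.Basis.toMatrix_apply, Pi.basisFun_repr]
      simp [hwdef, Matrix.mulVec_single]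
    conv_lhs => rw [hb]
    rw [AlternatingMap.smul_apply, hcoe, smul_eq_mul, hdw, hdetinv, mul_comm]
  rw [h1, h3, ← h2]
  ring

/-- `mulVec` by an invertible matrix, as a measurable equivalence. -/
noncomputable def mulVecEquiv (R : Matrix (Fin 3) (Fin 3) ℝ) (hdetu : IsUnit R.det) :
    (Fin 3 → ℝ) ≃ᵐ (Fin 3 → ℝ) where
  toFun := fun x => R.mulVec x
  invFun := fun x => R⁻¹.mulVec x
  left_inv := fun x => by
    show R⁻¹.mulVec (R.mulVec x) = x
    rw [Matrix.mulVec_mulVec, Matrix.nonsing_inv_mul _ hdetu, Matrix.one_mulVec]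
  right_inv := fun x => by
    show R.mulVec (R⁻¹.mulVec x) = x
    rw [Matrix.mulVec_mulVec, Matrix.mul_nonsing_inv _ hdetu, Matrix.one_mulVec]
  measurable_toFun := by
    have : Continuous (Matrix.toLin' R) := LinearMap.continuous_on_pi _
    exact this.measurable
  measurable_invFun := by
    have : Continuous (Matrix.toLin' R⁻¹) := LinearMap.continuous_on_pi _
    exact this.measurable

end aux

/-- Let `H(k)` be a differentiable family of invertible Hermitian matrices on ℝ³, `S` a
chiral symmetry (`S² = 1`, anticommuting with every `H(k)`), and suppose a unitary `U`,
a sign `χ ∈ {±1}` and an orthogonal transformation `R` of ℝ³ satisfy `U S U† = χ S` and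
`U H(k) U† = H(R k)`.  Then the 3D winding number `z_w` of `H` satisfies
`z_w = χ · det R · z_w`; in particular, if `χ · det R = −1` then `z_w = 0`. -/
theorem stmt5 {n : Type*} [Fintype n] [DecidableEq n]
    (H : (Fin 3 → ℝ) → Matrix n n ℂ) (S U : Matrix n n ℂ) (χ : ℝ)
    (R : Matrix (Fin 3) (Fin 3) ℝ)
    (hHdiff : Differentiable ℝ H)
    (hHherm : ∀ k, (H k).IsHermitian)
    (hHinv : ∀ k, IsUnit (H k))
    (hS2 : S * S = 1)
    (hSanti : ∀ k, S * H k = -(H k * S))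
    (hχ : χ = 1 ∨ χ = -1)
    (hU : U ∈ Matrix.unitaryGroup n ℂ)
    (hR : R ∈ Matrix.orthogonalGroup (Fin 3) ℝ)
    (hUS : U * S * star U = (χ : ℂ) • S)
    (hUH : ∀ k, U * H k * star U = H (R.mulVec k)) :
    windingNumber H S = χ * R.det * windingNumber H S ∧
      (χ * R.det = -1 → windingNumber H S = 0) := by
  classical
  have hχ2 : χ * χ = 1 := by rcases hχ with h | h <;> rw [h] <;> norm_num
  have hU1 : star U * U = 1 := (Unitary.mem_iff.mp hU).1
  have hU2 : U * star U = 1 := (Unitary.mem_iff.mp hU).2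
  have hdet2 : R.det * R.det = 1 := by
    have h := congrArg Matrix.det (Unitary.mem_iff.mp hR).1
    simpa [Matrix.det_mul, Matrix.star_eq_conjTranspose, Matrix.det_conjTranspose] using h
  have hdetu : IsUnit R.det := IsUnit.of_mul_eq_one _ hdet2
  have hdet1 : R.det = 1 ∨ R.det = -1 := mul_self_eq_one_iff.mp hdet2
  have hmp : MeasurePreserving (⇑(mulVecEquiv R hdetu)) volume volume := by
    constructor
    · exact (mulVecEquiv R hdetu).measurable
    · have hcoe : ⇑(mulVecEquiv R hdetu) = ⇑(Matrix.toLin' R) := by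
        funext x; rfl
      rw [hcoe, Real.map_matrix_volume_pi_eq_smul_volume_pi hdetu.ne_zero]
      have habs : |R.det⁻¹| = 1 := by
        rcases hdet1 with h | h <;> rw [h] <;> norm_num
      rw [habs, ENNReal.ofReal_one, one_smul]
  have key : (∫ k, wIntegrand H S k) = (χ * R.det) * ∫ k, wIntegrand H S k := by
    conv_lhs => rw [← hmp.integral_comp' (wIntegrand H S)]
    calc ∫ x, wIntegrand H S ((mulVecEquiv R hdetu) x)
        = ∫ x, (χ * R.det) * wIntegrand H S x := by
          refine integral_congr_ae (Filter.Eventually.of_forall fun x => ?_)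
          exact wIntegrand_mulVec H S U χ R hHdiff hHinv hχ2 hU1 hU2 hdet2 hUS hUH x
      _ = (χ * R.det) * ∫ x, wIntegrand H S x := integral_const_mul _ _
  have hz : windingNumber H S = χ * R.det * windingNumber H S := by
    have hrfl : windingNumber H S = (1 / (48 * Real.pi ^ 2)) * ∫ k, wIntegrand H S k := rfl
    conv_lhs => rw [hrfl, key]
    rw [hrfl]
    ring
  refine ⟨hz, fun h => ?_⟩
  rw [h] at hz
  linarith
end

section
/- Let ι be a loop on S² that decomposes as a concatenation ι = ι₁ * ι₂ with ι₂ = g·ι₁ for a symmetry g, and let m be a continuous map from the image of ι to GL⁺(L,ℝ) satisfying the constraint m(g·r) = F' m(r) F'⁻¹ for a fixed F' ∈ GL(L,ℝ). If the total winding W along ι (defined via the homotopy class of m∘ι in π₁(GL⁺(L,ℝ))) is odd, then m cannot be extended continuously to a map from the closed disk bounded by ι into GL(L,ℝ); i.e., any continuous extension of m to the region enclosed by ι must be singular (non-invertible) at some interior point. -/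
/-- `GL⁺(L,ℝ)`: the identity component of `GL(L,ℝ)`, i.e. invertible matrices of positive
determinant, as a subspace of matrix space. -/
abbrev GLpos (L : ℕ) : Type := {A : Matrix (Fin L) (Fin L) ℝ // 0 < A.det}

/-- The standard parametrization of the boundary circle of the closed unit disk in ℝ². -/
noncomputable def diskBoundary (t : unitInterval) : Metric.closedBall (0 : ℝ × ℝ) 1 :=
  ⟨(Real.cos (2 * Real.pi * t), Real.sin (2 * Real.pi * t)), by
    rw [Metric.mem_closedBall, dist_zero_right, Prod.norm_def]
    exact max_le (by rw [Real.norm_eq_abs]; exact Real.abs_cos_le_one _)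
      (by rw [Real.norm_eq_abs]; exact Real.abs_sin_le_one _)⟩

lemma diskBoundary_continuous : Continuous diskBoundary := by
  apply Continuous.subtype_mk
  fun_prop

lemma diskBoundary_zero : diskBoundary 0 = ⟨(1, 0), by
    rw [Metric.mem_closedBall, dist_zero_right, Prod.norm_def]
    simp⟩ := by
  apply Subtype.ext
  simp [diskBoundary]

lemma diskBoundary_one : diskBoundary 1 = diskBoundary 0 := by
  apply Subtype.ext
  simp [diskBoundary, Real.cos_two_pi, Real.sin_two_pi]

/-- Let `L ≥ 3` and let `γ` be a loop in `GL⁺(L,ℝ)` that decomposes as a concatenation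
`γ = ι₁ * ι₂` with `ι₂ = g·ι₁`, i.e. `ι₂(t) = F' ι₁(t) F'⁻¹` for a fixed invertible `F'`
(the symmetry constraint on the mass field).  If the total winding of `γ` is odd — i.e.
`γ` represents the nontrivial class of `π₁(GL⁺(L,ℝ)) ≅ ℤ/2`, equivalently `γ` is not
null-homotopic — then `γ` admits no continuous extension `Φ` to the closed disk with
values in the invertible matrices: any continuous extension to the disk must be singular
at some point. -/
theorem stmt11 (L : ℕ) (hL : 3 ≤ L) (x y : GLpos L)
    (ι₁ : Path x y) (ι₂ : Path y x) (γ : Path x x)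
    (F' : Matrix (Fin L) (Fin L) ℝ) (hF' : IsUnit F')
    (hsym : ∀ t, (ι₂ t).val = F' * (ι₁ t).val * F'⁻¹)
    (hγ : γ = ι₁.trans ι₂)
    (hodd : ¬ γ.Homotopic (Path.refl x)) :
    ¬ ∃ Φ : Metric.closedBall (0 : ℝ × ℝ) 1 → Matrix (Fin L) (Fin L) ℝ,
        Continuous Φ ∧ (∀ z, (Φ z).det ≠ 0) ∧
          ∀ t : unitInterval, Φ (diskBoundary t) = (γ t).val := by
  rintro ⟨Φ, hΦc, hΦdet, hΦb⟩
  -- the closed ball is connected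
  haveI : ConnectedSpace (Metric.closedBall (0 : ℝ × ℝ) 1) := by
    rw [← isConnected_iff_connectedSpace]
    exact ⟨⟨0, Metric.mem_closedBall_self zero_le_one⟩,
      (convex_closedBall (0 : ℝ × ℝ) 1).isPreconnected⟩
  have hdetc : Continuous fun z => (Φ z).det := hΦc.matrix_det
  -- det is positive everywhere
  have hpos : ∀ z, 0 < (Φ z).det := by
    intro z
    rcases lt_or_gt_of_ne (hΦdet z) with h | h
    · exfalso
      have h0 : (0 : ℝ) ∈ Set.Icc ((Φ z).det) ((Φ (diskBoundary 0)).det) := by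
        refine ⟨le_of_lt h, ?_⟩
        rw [hΦb 0]
        exact le_of_lt (γ 0).2
      obtain ⟨w, hw⟩ := intermediate_value_univ z (diskBoundary 0) hdetc h0
      exact hΦdet w hw
    · exact h
  set ΦG : Metric.closedBall (0 : ℝ × ℝ) 1 → GLpos L := fun z => ⟨Φ z, hpos z⟩ with hΦG
  have hΦGc : Continuous ΦG := hΦc.subtype_mk _
  have hΦGb : ∀ t : unitInterval, ΦG (diskBoundary t) = γ t := by
    intro t; exact Subtype.ext (hΦb t)
  -- the contraction of the boundary circle inside the disk
  have hmem : ∀ s t : unitInterval,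
      (1 - s.val) • (diskBoundary t).val + s.val • (diskBoundary 0).val
        ∈ Metric.closedBall (0 : ℝ × ℝ) 1 :=
    fun s t => (convex_closedBall (0 : ℝ × ℝ) 1) (diskBoundary t).2 (diskBoundary 0).2
      (sub_nonneg.2 s.2.2) s.2.1 (by ring)
  set c : unitInterval × unitInterval → Metric.closedBall (0 : ℝ × ℝ) 1 :=
    fun p => ⟨(1 - p.1.val) • (diskBoundary p.2).val + p.1.val • (diskBoundary 0).val,
      hmem p.1 p.2⟩ with hc
  have hcc : Continuous c := by
    apply Continuous.subtype_mk
    have h1 : Continuous fun p : unitInterval × unitInterval => (diskBoundary p.2).val :=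
      continuous_subtype_val.comp (diskBoundary_continuous.comp continuous_snd)
    fun_prop
  have hc0 : ∀ t, c (0, t) = diskBoundary t := by
    intro t; apply Subtype.ext; simp [hc]
  have hcs0 : ∀ s, c (s, 0) = diskBoundary 0 := by
    intro s; apply Subtype.ext
    simp only [hc]
    module
  have hcs1 : ∀ s, c (s, 1) = diskBoundary 0 := by
    intro s; apply Subtype.ext
    simp only [hc, diskBoundary_one]
    module
  have hc1 : ∀ t, c (1, t) = diskBoundary 0 := by
    intro t; apply Subtype.ext; simp [hc]
  have hγ0 : γ 0 = x := γ.source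
  have hγ1 : γ 1 = x := γ.target
  have H : γ.Homotopy (Path.refl x) := by
    refine ⟨⟨⟨fun p => ΦG (c p), hΦGc.comp hcc⟩, ?_, ?_⟩, ?_⟩
    · intro t
      simp only [ContinuousMap.coe_mk]
      rw [hc0 t, hΦGb t]
      rfl
    · intro t
      simp only [ContinuousMap.coe_mk]
      rw [hc1 t, hΦGb 0, hγ0]
      rfl
    · intro s t ht
      simp only [Set.mem_insert_iff, Set.mem_singleton_iff] at ht
      rcases ht with rfl | rfl
      · show ΦG (c (s, 0)) = _
        rw [hcs0 s, hΦGb 0, hγ0]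
        simp [hγ0]
      · show ΦG (c (s, 1)) = _
        rw [hcs1 s, hΦGb 0, hγ0]
        simp [hγ1]
  exact hodd ⟨H⟩
end

section
/- Let H(θ) = ½{L_z, cos(mθ)s_x + sin(mθ)s_y} with L_z = −i d/dθ acting on smooth 2-component functions on the circle, where m is an odd integer and s_x, s_y are Pauli matrices. Then the ansatz Φ_l(θ) = (a e^{ilθ}, b e^{i(l+m)θ})ᵀ yields eigenvalues E_{l,±} = ±(2l+m)/2 for l ∈ ℤ, with eigenvectors (a,b) = (1,±1)/√2. In particular, since m is odd, 2l+m is odd for all integers l, so E_{l,±} ≠ 0 for all l and the spectrum of H(θ) on this ansatz family is gapped (bounded away from zero by 1/2). -/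
lemma deriv_k_cexp (k c : ℂ) (θ : ℝ) :
    deriv (fun θ' : ℝ => k * Complex.exp (c * (θ' : ℂ))) θ
      = k * c * Complex.exp (c * (θ : ℂ)) := by
  have h : HasDerivAt (fun θ' : ℝ => (c * (θ' : ℂ))) c θ := by
    simpa [mul_comm] using (Complex.ofRealCLM.hasDerivAt (x := θ)).const_mul c
  have h2 := (h.cexp.const_mul k).deriv
  simpa [mul_comm, mul_assoc, mul_left_comm] using h2

/-- For the edge Hamiltonian `H(θ) = ½{L_z, cos(mθ)s_x + sin(mθ)s_y}` with `L_z = −i d/dθ`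
and `m` an odd integer, the ansatz `Φ_l(θ) = (a e^{ilθ}, b e^{i(l+m)θ})ᵀ` with
`(a,b) = (1, ε)/√2`, `ε = ±1`, is an eigenfunction with eigenvalue `E = ε(2l+m)/2`
(written componentwise:
`(HΦ)₁ = ½(−i ∂_θ(e^{−imθ}Φ₂) + e^{−imθ}(−i ∂_θ Φ₂)) = E Φ₁` and similarly for the
second component).  Since `m` is odd, `2l + m` is odd for every `l ∈ ℤ`, so `E ≠ 0` and
all these eigenvalues satisfy `|(2l+m)/2| ≥ 1/2`: the spectrum is gapped. -/
theorem stmt13 (m l : ℤ) (hm : Odd m) (ε : ℝ) (hε : ε = 1 ∨ ε = -1) :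
    let E : ℝ := ε * ((2 * l + m : ℤ) : ℝ) / 2
    let a : ℂ := 1 / Real.sqrt 2
    let b : ℂ := (ε : ℂ) / Real.sqrt 2
    let ψ₁ : ℝ → ℂ := fun θ => a * Complex.exp (Complex.I * (l : ℂ) * (θ : ℂ))
    let ψ₂ : ℝ → ℂ := fun θ => b * Complex.exp (Complex.I * ((l : ℂ) + (m : ℂ)) * (θ : ℂ))
    (∀ θ : ℝ,
      (1 / 2 : ℂ) *
          (-Complex.I *
              deriv (fun θ' : ℝ =>
                Complex.exp (-Complex.I * (m : ℂ) * (θ' : ℂ)) * ψ₂ θ') θ +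
            Complex.exp (-Complex.I * (m : ℂ) * (θ : ℂ)) * (-Complex.I * deriv ψ₂ θ)) =
        (E : ℂ) * ψ₁ θ ∧
      (1 / 2 : ℂ) *
          (-Complex.I *
              deriv (fun θ' : ℝ =>
                Complex.exp (Complex.I * (m : ℂ) * (θ' : ℂ)) * ψ₁ θ') θ +
            Complex.exp (Complex.I * (m : ℂ) * (θ : ℂ)) * (-Complex.I * deriv ψ₁ θ)) =
        (E : ℂ) * ψ₂ θ) ∧
    E ≠ 0 ∧
    (∀ l' : ℤ, (1 / 2 : ℝ) ≤ |((2 * l' + m : ℤ) : ℝ) / 2|) := by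
  intro E a b ψ₁ ψ₂
  have hε2 : (ε : ℂ) * (ε : ℂ) = 1 := by
    rcases hε with h | h <;> simp [h]
  have hII : -Complex.I * Complex.I = 1 := by simp
  have hsq : (Real.sqrt 2 : ℂ) ≠ 0 := by
    simp [Complex.ofReal_ne_zero, Real.sqrt_eq_zero']
  refine ⟨?_, ?_, ?_⟩
  · intro θ
    set X : ℂ := Complex.exp (Complex.I * (l : ℂ) * (θ : ℂ)) with hX
    set Y : ℂ := Complex.exp (Complex.I * ((l : ℂ) + (m : ℂ)) * (θ : ℂ)) with hY
    have hZY : Complex.exp (-Complex.I * (m : ℂ) * (θ : ℂ)) * Y = X := by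
      rw [hX, hY, ← Complex.exp_add]; ring_nf
    have hZX : Complex.exp (Complex.I * (m : ℂ) * (θ : ℂ)) * X = Y := by
      rw [hX, hY, ← Complex.exp_add]; ring_nf
    have key1 : deriv (fun θ' : ℝ =>
        Complex.exp (-Complex.I * (m : ℂ) * (θ' : ℂ)) * ψ₂ θ') θ
        = b * (Complex.I * (l : ℂ)) * X := by
      have hf : (fun θ' : ℝ =>
          Complex.exp (-Complex.I * (m : ℂ) * (θ' : ℂ)) * ψ₂ θ')
          = fun θ' : ℝ => b * Complex.exp ((Complex.I * (l : ℂ)) * (θ' : ℂ)) := by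
        funext θ'
        simp only [ψ₂]
        rw [← mul_assoc, mul_comm (Complex.exp _) b, mul_assoc, ← Complex.exp_add]
        ring_nf
      rw [hf, deriv_k_cexp, hX]
    have key2 : deriv ψ₂ θ = b * (Complex.I * ((l : ℂ) + (m : ℂ))) * Y := by
      rw [hY]; exact deriv_k_cexp b (Complex.I * ((l : ℂ) + (m : ℂ))) θ
    have key3 : deriv (fun θ' : ℝ =>
        Complex.exp (Complex.I * (m : ℂ) * (θ' : ℂ)) * ψ₁ θ') θ
        = a * (Complex.I * ((l : ℂ) + (m : ℂ))) * Y := by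
      have hf : (fun θ' : ℝ =>
          Complex.exp (Complex.I * (m : ℂ) * (θ' : ℂ)) * ψ₁ θ')
          = fun θ' : ℝ => a * Complex.exp ((Complex.I * ((l : ℂ) + (m : ℂ))) * (θ' : ℂ)) := by
        funext θ'
        simp only [ψ₁]
        rw [← mul_assoc, mul_comm (Complex.exp _) a, mul_assoc, ← Complex.exp_add]
        ring_nf
      rw [hf, deriv_k_cexp, hY]
    have key4 : deriv ψ₁ θ = a * (Complex.I * (l : ℂ)) * X := by
      rw [hX]; exact deriv_k_cexp a (Complex.I * (l : ℂ)) θ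
    constructor
    · rw [key1, key2]
      have hrw : Complex.exp (-Complex.I * (m : ℂ) * (θ : ℂ)) *
          (-Complex.I * (b * (Complex.I * ((l : ℂ) + (m : ℂ))) * Y))
          = -Complex.I * (b * (Complex.I * ((l : ℂ) + (m : ℂ))) * X) := by
        rw [← hZY]; ring
      rw [hrw]
      simp only [ψ₁, E, a, b]
      push_cast
      linear_combination
        ((1/2 : ℂ) * ((ε:ℂ)/(Real.sqrt 2 : ℂ)) * (l:ℂ) * X
          + (1/2 : ℂ) * ((ε:ℂ)/(Real.sqrt 2 : ℂ)) * ((l:ℂ)+(m:ℂ)) * X) * hII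
    · rw [key3, key4]
      have hrw : Complex.exp (Complex.I * (m : ℂ) * (θ : ℂ)) *
          (-Complex.I * (a * (Complex.I * (l : ℂ)) * X))
          = -Complex.I * (a * (Complex.I * (l : ℂ)) * Y) := by
        rw [← hZX]; ring
      rw [hrw]
      simp only [ψ₂, E, a, b]
      push_cast
      linear_combination
        ((1/2 : ℂ) * (1/(Real.sqrt 2 : ℂ)) * ((l:ℂ)+(m:ℂ)) * Y
          + (1/2 : ℂ) * (1/(Real.sqrt 2 : ℂ)) * (l:ℂ) * Y) * hII +
        (-((2*(l:ℂ)+(m:ℂ))/2) * (1/(Real.sqrt 2 : ℂ)) * Y) * hε2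
  · have hodd : Odd (2 * l + m) := by
      obtain ⟨k, hk⟩ := hm
      exact ⟨l + k, by omega⟩
    have hne : (2 * l + m) ≠ 0 := by
      intro h; rw [h] at hodd; simp at hodd
    have hεne : ε ≠ 0 := by rcases hε with h | h <;> simp [h]
    simp only [E]
    intro h
    apply hne
    have h' : ε * ((2 * l + m : ℤ) : ℝ) = 0 :=
      (div_eq_zero_iff.mp h).resolve_right (by norm_num)
    rcases mul_eq_zero.mp h' with h1 | h1
    · exact absurd h1 hεne
    · exact_mod_cast h1
  · intro l'
    have hodd : Odd (2 * l' + m) := by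
      obtain ⟨k, hk⟩ := hm
      exact ⟨l' + k, by omega⟩
    have hne' : 2 * l' + m ≠ 0 := by
      rcases hodd with ⟨k, hk⟩; omega
    have h1 : (1 : ℤ) ≤ |2 * l' + m| := Int.one_le_abs hne'
    have h2 : (1:ℝ) ≤ |((2 * l' + m : ℤ) : ℝ)| := by
      rw [← Int.cast_abs]; exact_mod_cast h1
    rw [abs_div]
    have h3 : |(2:ℝ)| = 2 := by norm_num
    rw [h3]
    linarith
end
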